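/- On [0,1) with Lebesgue measure, for f = 1_{[0,1/2)} and any c ∈ {0,1}, the oscillation at level 1/2 satisfies (1_{[0,1)}(f − c))*(|[0,1)|/2) = 0, hence ω_{1/2}(f;[0,1)) = 0; yet for any median m ∈ (0,1) of f on [0,1), (1_{[0,1)}(f − m))*(|[0,1)|/2) > 0. Thus the bound (1_Q(f−m_f(Q)))*(ν|Q|) ≤ 2ω_ν(f;Q) fails at ν = 1/2. -/

import Mathlib

open MeasureTheory ENNReal

/-- Decreasing rearrangement `g*(t) = inf {α ≥ 0 : |{|g| > α}| ≤ t}`, in `ℝ≥0∞`. -/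
noncomputable def rearr (g : ℝ → ℝ) (t : ℝ≥0∞) : ℝ≥0∞ :=
  sInf {α : ℝ≥0∞ | volume {x | α < ENNReal.ofReal |g x|} ≤ t}

/-- `m` is a median of `f` on `Q` (Lebesgue measure on `ℝ`). -/
def IsMedian (f : ℝ → ℝ) (Q : Set ℝ) (m : ℝ) : Prop :=
  volume (Q ∩ {x | m < f x}) ≤ volume Q / 2 ∧
    volume (Q ∩ {x | f x < m}) ≤ volume Q / 2

/-- The local oscillation `ω_ν(f;Q) = inf_c (1_Q(f−c))*(ν|Q|)`. -/
noncomputable def osc (ν : ℝ) (f : ℝ → ℝ) (Q : Set ℝ) : ℝ≥0∞ :=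
  ⨅ c : ℝ, rearr (Q.indicator fun x => f x - c) (ENNReal.ofReal ν * volume Q)

/-! A function `g` with `|{g ≠ 0}| ≤ t` has `g*(t) = 0`, so for `f = 1_S` the constants `0` and
`1` leave `1_Q(f - c)` supported on `Q ∩ S` and `Q \ S`, each of half the measure of `Q`.
A constant `m ∈ (0,1)` instead keeps `|f - m| ≥ min m (1 - m) > 0` on all of `Q`, whose measure
exceeds `|Q|/2`, so `(1_Q(f - m))*(|Q|/2) > 0 = 2 ω_{1/2}(f;Q)`. -/

open Set Function

lemma rearr_eq_zero_of_volume_support_le {g : ℝ → ℝ} {t : ℝ≥0∞}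
    (h : volume (support g) ≤ t) : rearr g t = 0 :=
  nonpos_iff_eq_zero.1 <| sInf_le <| by simpa [Function.support, abs_pos] using h

lemma ofReal_le_rearr_of_le_abs {g : ℝ → ℝ} {t : ℝ≥0∞} {S : Set ℝ} {δ : ℝ}
    (hS : t < volume S) (hδ : ∀ x ∈ S, δ ≤ |g x|) : ENNReal.ofReal δ ≤ rearr g t := by
  refine le_sInf fun α hα => le_of_not_gt fun hlt => ?_
  have hsub : S ⊆ {x | α < ENNReal.ofReal |g x|} := fun x hx =>
    hlt.trans_le (ENNReal.ofReal_le_ofReal (hδ x hx))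
  exact (hS.trans_le (measure_mono hsub)).not_ge hα

section Indicator

variable {α : Type*} (Q S : Set α)

lemma support_indicator_indicator_one_sub_zero :
    support (Q.indicator fun x => S.indicator (fun _ => (1 : ℝ)) x - 0) = Q ∩ S := by
  ext x
  by_cases hQ : x ∈ Q <;> by_cases hS : x ∈ S <;> simp [hQ, hS]

lemma support_indicator_indicator_one_sub_one :
    support (Q.indicator fun x => S.indicator (fun _ => (1 : ℝ)) x - 1) = Q \ S := by
  ext x
  by_cases hQ : x ∈ Q <;> by_cases hS : x ∈ S <;> simp [hQ, hS]

lemma min_le_abs_indicator_one_sub (m : ℝ) (x : α) :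
    min m (1 - m) ≤ |S.indicator (fun _ => (1 : ℝ)) x - m| := by
  by_cases hS : x ∈ S
  · simpa [hS] using (min_le_right m (1 - m)).trans (le_abs_self _)
  · simpa [hS] using (min_le_left m (1 - m)).trans (le_abs_self m)

end Indicator

/-- for `f = 1_{[0,1/2)}` and `Q = [0,1)`: for `c ∈ {0,1}` the rearranged
oscillation at level `1/2` vanishes, so `ω_{1/2}(f;Q) = 0`; yet for any median
`m ∈ (0,1)` of `f` on `Q`, `(1_Q(f−m))*(|Q|/2) > 0`, so the bound
`(1_Q(f−m))*(ν|Q|) ≤ 2 ω_ν(f;Q)` fails at `ν = 1/2`. -/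
theorem stmt19 :
    let f : ℝ → ℝ := (Set.Ico (0 : ℝ) (1 / 2)).indicator fun _ => 1
    let Q : Set ℝ := Set.Ico (0 : ℝ) 1
    (∀ c ∈ ({0, 1} : Set ℝ),
        rearr (Q.indicator fun x => f x - c) (volume Q / 2) = 0) ∧
      osc (1 / 2) f Q = 0 ∧
      (∀ m ∈ Set.Ioo (0 : ℝ) 1, IsMedian f Q m →
        0 < rearr (Q.indicator fun x => f x - m) (volume Q / 2)) ∧
      ∀ m ∈ Set.Ioo (0 : ℝ) 1, IsMedian f Q m →
        ¬ rearr (Q.indicator fun x => f x - m) (volume Q / 2) ≤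
            2 * osc (1 / 2) f Q := by
  intro f Q
  have hQ : volume Q = 1 := by simp [Q, Real.volume_Ico]
  have hhalf : volume Q / 2 = ENNReal.ofReal (1 / 2) := by
    rw [hQ, one_div, one_div, ENNReal.ofReal_inv_of_pos two_pos, ofReal_ofNat]
  have hlevel : ENNReal.ofReal (1 / 2) * volume Q = volume Q / 2 := by
    rw [hhalf, hQ, mul_one]
  have hvanish : ∀ c ∈ ({0, 1} : Set ℝ),
      rearr (Q.indicator fun x => f x - c) (volume Q / 2) = 0 := by
    rintro c (rfl | rfl) <;> apply rearr_eq_zero_of_volume_support_le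
    · rw [support_indicator_indicator_one_sub_zero, hhalf]
      refine (measure_mono inter_subset_right).trans_eq ?_
      simp [Real.volume_Ico]
    · rw [support_indicator_indicator_one_sub_one, hhalf]
      have hdiff : Q \ Ico 0 (1 / 2) ⊆ Ico (1 / 2) 1 :=
        fun x ⟨⟨h0, h1⟩, hS⟩ => ⟨not_lt.1 fun h => hS ⟨h0, h⟩, h1⟩
      refine (measure_mono hdiff).trans_eq ?_
      norm_num [Real.volume_Ico]
  have hosc : osc (1 / 2) f Q = 0 :=
    nonpos_iff_eq_zero.1 <| (iInf_le _ 0).trans_eq (hlevel ▸ hvanish 0 (by simp))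
  have hpos : ∀ m ∈ Ioo (0 : ℝ) 1, IsMedian f Q m →
      0 < rearr (Q.indicator fun x => f x - m) (volume Q / 2) := by
    rintro m ⟨hm0, hm1⟩ -
    refine (ENNReal.ofReal_pos.2 (lt_min hm0 (sub_pos.2 hm1))).trans_le
      (ofReal_le_rearr_of_le_abs (S := Q) ?_ fun x hx => ?_)
    · rw [hQ]
      exact ENNReal.half_lt_self one_ne_zero one_ne_top
    · rw [indicator_of_mem hx]
      exact min_le_abs_indicator_one_sub _ m x
  refine ⟨hvanish, hosc, hpos, fun m hm hmed h => ?_⟩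
  rw [hosc, mul_zero, nonpos_iff_eq_zero] at h
  exact (hpos m hm hmed).ne' h
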